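/- arXiv:2302.11663 — 2 statements merged into one kernel-verified Lean document; each statement's English description precedes it below -/
import Mathlib

section
/- Let H be a finite-dimensional complex Hilbert space, let {e_b}_{b∈B} be an orthonormal family with |B| = N ≥ 1, fix b₀ ∈ B, set u = N^{-1/2} Σ_b e_b and Π = Σ_{b≠b₀} e_b e_b*. Then for every positive semidefinite operator ρ on H with Tr(ρ) = 1 (a density operator): ⟨u, ρ u⟩ ≤ 2·Tr(Π ρ) + 2/N. -/
/-!
Write `q x = Re ⟪x, ρ x⟫`, a nonnegative quadratic form. Positivity of `q (x - y)` bounds the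
symmetrized cross terms by `q x + q y`; hence `q (x + y) ≤ 2 q x + 2 q y`, and, summing over pairs,
`q (∑_{b ∈ S} e b) ≤ |S| ∑_{b ∈ S} q (e b)`. With `∑ e b = e b₀ + ∑_{b ≠ b₀} e b`, the right-hand
sum is `Tr (Π ρ)`, and `q (e b₀) ≤ Tr ρ = 1` by completing `e b₀` to an orthonormal basis.
-/

open RCLike
open scoped InnerProductSpace

namespace LinearMap

variable {𝕜 E : Type*} [RCLike 𝕜] [NormedAddCommGroup E] [InnerProductSpace 𝕜 E]

lemma re_inner_map_add_inner_map_swap_le {T : E →ₗ[𝕜] E} (hT : ∀ x, 0 ≤ re ⟪x, T x⟫_𝕜)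
    (x y : E) :
    re ⟪x, T y⟫_𝕜 + re ⟪y, T x⟫_𝕜 ≤ re ⟪x, T x⟫_𝕜 + re ⟪y, T y⟫_𝕜 := by
  have h := hT (x - y)
  simp only [map_sub, inner_sub_left, inner_sub_right] at h
  linarith

lemma re_inner_map_add_le {T : E →ₗ[𝕜] E} (hT : ∀ x, 0 ≤ re ⟪x, T x⟫_𝕜) (x y : E) :
    re ⟪x + y, T (x + y)⟫_𝕜 ≤ 2 * re ⟪x, T x⟫_𝕜 + 2 * re ⟪y, T y⟫_𝕜 := by
  have h := re_inner_map_add_inner_map_swap_le hT x y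
  simp only [map_add, inner_add_left, inner_add_right]
  linarith

lemma re_inner_map_sum_le {T : E →ₗ[𝕜] E} (hT : ∀ x, 0 ≤ re ⟪x, T x⟫_𝕜) {ι : Type*}
    (s : Finset ι) (v : ι → E) :
    re ⟪∑ i ∈ s, v i, T (∑ i ∈ s, v i)⟫_𝕜 ≤ s.card * ∑ i ∈ s, re ⟪v i, T (v i)⟫_𝕜 := by
  have hexpand : re ⟪∑ i ∈ s, v i, T (∑ i ∈ s, v i)⟫_𝕜
      = ∑ i ∈ s, ∑ j ∈ s, re ⟪v i, T (v j)⟫_𝕜 := by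
    simp only [map_sum, sum_inner, inner_sum]
    exact Finset.sum_comm
  have hsymm : 2 * ∑ i ∈ s, ∑ j ∈ s, re ⟪v i, T (v j)⟫_𝕜
      = ∑ i ∈ s, ∑ j ∈ s, (re ⟪v i, T (v j)⟫_𝕜 + re ⟪v j, T (v i)⟫_𝕜) := by
    simp only [Finset.sum_add_distrib]
    rw [Finset.sum_comm (f := fun i j => re ⟪v j, T (v i)⟫_𝕜)]
    ring
  have hbound : ∑ i ∈ s, ∑ j ∈ s, (re ⟪v i, T (v j)⟫_𝕜 + re ⟪v j, T (v i)⟫_𝕜)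
      ≤ ∑ i ∈ s, ∑ j ∈ s, (re ⟪v i, T (v i)⟫_𝕜 + re ⟪v j, T (v j)⟫_𝕜) :=
    Finset.sum_le_sum fun i _ => Finset.sum_le_sum fun j _ =>
      re_inner_map_add_inner_map_swap_le hT _ _
  have hdiag : ∑ i ∈ s, ∑ j ∈ s, (re ⟪v i, T (v i)⟫_𝕜 + re ⟪v j, T (v j)⟫_𝕜)
      = 2 * (s.card * ∑ i ∈ s, re ⟪v i, T (v i)⟫_𝕜) := by
    simp only [Finset.sum_add_distrib, Finset.sum_const, nsmul_eq_mul, ← Finset.mul_sum]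
    ring
  linarith

lemma re_inner_map_real_smul [Module ℝ E] [IsScalarTower ℝ 𝕜 E] (T : E →ₗ[𝕜] E) (c : ℝ)
    (x : E) : re ⟪c • x, T (c • x)⟫_𝕜 = c ^ 2 * re ⟪x, T x⟫_𝕜 := by
  rw [map_smul_of_tower, real_smul_eq_coe_smul (K := 𝕜), real_smul_eq_coe_smul (K := 𝕜),
    inner_smul_real_left, inner_smul_real_right, smul_smul, smul_re]
  ring

lemma re_inner_map_self_le_re_trace [FiniteDimensional 𝕜 E] {T : E →ₗ[𝕜] E}
    (hT : ∀ x, 0 ≤ re ⟪x, T x⟫_𝕜) {v : E} (hv : ‖v‖ = 1) :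
    re ⟪v, T v⟫_𝕜 ≤ re (trace 𝕜 E T) := by
  have hortho : Orthonormal 𝕜 ((↑) : ({v} : Set E) → E) :=
    orthonormal_subsingleton_iff.mpr fun i => by rw [Set.mem_singleton_iff.mp i.2, hv]
  obtain ⟨u, b, hvu, hb⟩ := hortho.exists_orthonormalBasis_extension
  have hmem : v ∈ u := hvu (Set.mem_singleton v)
  rw [trace_eq_sum_inner T b, map_sum re]
  calc re ⟪v, T v⟫_𝕜 = re ⟪b ⟨v, hmem⟩, T (b ⟨v, hmem⟩)⟫_𝕜 := by rw [hb]
    _ ≤ ∑ i, re ⟪b i, T (b i)⟫_𝕜 :=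
      Finset.single_le_sum (fun i _ => hT (b i)) (Finset.mem_univ _)

lemma trace_sum_smulRight_comp [FiniteDimensional 𝕜 E] {ι : Type*} (s : Finset ι) (v : ι → E)
    (T : E →ₗ[𝕜] E) :
    trace 𝕜 E ((∑ i ∈ s, (innerₛₗ 𝕜 (v i)).smulRight (v i)) ∘ₗ T)
      = ∑ i ∈ s, ⟪v i, T (v i)⟫_𝕜 := by
  have hcomp : (∑ i ∈ s, (innerₛₗ 𝕜 (v i)).smulRight (v i)) ∘ₗ T
      = ∑ i ∈ s, (innerₛₗ 𝕜 (v i)).smulRight (v i) ∘ₗ T :=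
    map_sum (lcomp 𝕜 E T) _ s
  rw [hcomp, map_sum]
  exact Finset.sum_congr rfl fun i _ => trace_smulRight (innerₛₗ 𝕜 (v i) ∘ₗ T) (v i)

end LinearMap

theorem stmt_6_general {H : Type*} [NormedAddCommGroup H] [InnerProductSpace ℂ H]
    [FiniteDimensional ℂ H]
    {B : Type*} [Fintype B] [DecidableEq B] (e : B → H) (he : Orthonormal ℂ e)
    (b₀ : B)
    (ρ : H →ₗ[ℂ] H)
    (hpos : ∀ x : H, 0 ≤ ((inner ℂ x (ρ x) : ℂ)).re)
    (htr : LinearMap.trace ℂ H ρ = 1) :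
    ((inner ℂ ((Real.sqrt (Fintype.card B))⁻¹ • ∑ b, e b)
        (ρ ((Real.sqrt (Fintype.card B))⁻¹ • ∑ b, e b)) : ℂ)).re ≤
      2 * (LinearMap.trace ℂ H
            ((∑ b ∈ Finset.univ.filter (· ≠ b₀),
              (innerₛₗ ℂ (e b)).smulRight (e b)) ∘ₗ ρ)).re
        + 2 / (Fintype.card B : ℝ) := by
  have hsplit : ∑ b, e b = e b₀ + ∑ b ∈ Finset.univ.filter (· ≠ b₀), e b := by
    rw [Finset.filter_ne', Finset.add_sum_erase _ e (Finset.mem_univ b₀)]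
  set S := Finset.univ.filter (· ≠ b₀)
  have hρ : ∀ x, 0 ≤ RCLike.re ⟪x, ρ x⟫_ℂ := hpos
  have hN : (0 : ℝ) < Fintype.card B := by exact_mod_cast Fintype.card_pos_iff.mpr ⟨b₀⟩
  have hS : (S.card : ℝ) ≤ Fintype.card B := by exact_mod_cast Finset.card_le_univ S
  have hb₀ : (inner ℂ (e b₀) (ρ (e b₀)) : ℂ).re ≤ 1 := by
    simpa [htr] using LinearMap.re_inner_map_self_le_re_trace hρ (he.1 b₀)
  have hsum := LinearMap.re_inner_map_sum_le hρ S e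
  have hadd := LinearMap.re_inner_map_add_le hρ (e b₀) (∑ b ∈ S, e b)
  have hS_nonneg : 0 ≤ ∑ b ∈ S, (inner ℂ (e b) (ρ (e b)) : ℂ).re :=
    Finset.sum_nonneg fun b _ => hpos _
  have hscale := LinearMap.re_inner_map_real_smul ρ (Real.sqrt (Fintype.card B))⁻¹ (∑ b, e b)
  simp only [RCLike.re_to_complex] at hsum hadd hscale
  rw [hscale, inv_pow, Real.sq_sqrt hN.le, hsplit, inv_mul_le_iff₀ hN,
    LinearMap.trace_sum_smulRight_comp, Complex.re_sum, mul_add, mul_div_cancel₀ _ hN.ne']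
  linarith [mul_le_mul_of_nonneg_right hS hS_nonneg]

/-- Mixed-state version: for a density operator `ρ` (positive semidefinite, trace 1),
`⟨u, ρ u⟩ ≤ 2 Tr(Π ρ) + 2/N`, where `u` is the uniform superposition over an
orthonormal family `e` and `Π = ∑_{b ≠ b₀} e_b e_b*`. -/
theorem stmt_6 {H : Type*} [NormedAddCommGroup H] [InnerProductSpace ℂ H]
    [FiniteDimensional ℂ H]
    {B : Type*} [Fintype B] [DecidableEq B] (e : B → H) (he : Orthonormal ℂ e)
    (b₀ : B) (hN : 1 ≤ Fintype.card B)
    (ρ : H →ₗ[ℂ] H)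
    (hsym : ∀ x y : H, (inner ℂ (ρ x) y : ℂ) = inner ℂ x (ρ y))
    (hpos : ∀ x : H, 0 ≤ ((inner ℂ x (ρ x) : ℂ)).re)
    (htr : LinearMap.trace ℂ H ρ = 1) :
    ((inner ℂ ((Real.sqrt (Fintype.card B))⁻¹ • ∑ b, e b)
        (ρ ((Real.sqrt (Fintype.card B))⁻¹ • ∑ b, e b)) : ℂ)).re ≤
      2 * (LinearMap.trace ℂ H
            ((∑ b ∈ Finset.univ.filter (· ≠ b₀),
              (innerₛₗ ℂ (e b)).smulRight (e b)) ∘ₗ ρ)).re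
        + 2 / (Fintype.card B : ℝ) :=
  stmt_6_general e he b₀ ρ hpos htr
end

section
/- For real-valued random variables (distributions) D₀, D₁ on ℝ, define the shift distance with parameter ε ≥ 0, Δ^ε(D₀,D₁), as the infimum over δ ≥ 0 such that for all x ∈ ℝ: P(D₀ ≤ x) ≤ P(D₁ ≤ x+ε) + δ, P(D₀ ≥ x) ≤ P(D₁ ≥ x−ε) + δ, P(D₁ ≤ x) ≤ P(D₀ ≤ x+ε) + δ, and P(D₁ ≥ x) ≤ P(D₀ ≥ x−ε) + δ. Then the shift distance satisfies the generalized triangle inequality: Δ^{ε₁+ε₂}(D₀, D₂) ≤ Δ^{ε₁}(D₀, D₁) + Δ^{ε₂}(D₁, D₂) for all distributions D₀, D₁, D₂ and all ε₁, ε₂ ≥ 0. -/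
open MeasureTheory

/-- Zhandry's shift distance with parameter `ε` between two real-valued
distributions (probability measures on `ℝ`). -/
noncomputable def shiftDist (ε : ℝ) (μ ν : Measure ℝ) : ℝ :=
  sInf {δ : ℝ | 0 ≤ δ ∧ ∀ x : ℝ,
    (μ (Set.Iic x)).toReal ≤ (ν (Set.Iic (x + ε))).toReal + δ ∧
    (μ (Set.Ici x)).toReal ≤ (ν (Set.Ici (x - ε))).toReal + δ ∧
    (ν (Set.Iic x)).toReal ≤ (μ (Set.Iic (x + ε))).toReal + δ ∧
    (ν (Set.Ici x)).toReal ≤ (μ (Set.Ici (x - ε))).toReal + δ}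

lemma shiftSet_one_mem (ε : ℝ) (μ ν : Measure ℝ)
    [IsProbabilityMeasure μ] [IsProbabilityMeasure ν] :
    (1 : ℝ) ∈ {δ : ℝ | 0 ≤ δ ∧ ∀ x : ℝ,
    (μ (Set.Iic x)).toReal ≤ (ν (Set.Iic (x + ε))).toReal + δ ∧
    (μ (Set.Ici x)).toReal ≤ (ν (Set.Ici (x - ε))).toReal + δ ∧
    (ν (Set.Iic x)).toReal ≤ (μ (Set.Iic (x + ε))).toReal + δ ∧
    (ν (Set.Ici x)).toReal ≤ (μ (Set.Ici (x - ε))).toReal + δ} := by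
  refine ⟨zero_le_one, fun x => ?_⟩
  have h : ∀ (κ : Measure ℝ) [IsProbabilityMeasure κ] (s : Set ℝ),
      (κ s).toReal ≤ 1 := by
    intro κ _ s
    have := prob_le_one (μ := κ) (s := s)
    simpa using ENNReal.toReal_le_of_le_ofReal zero_le_one (by simpa using this)
  exact ⟨(h _ _).trans (le_add_of_nonneg_left ENNReal.toReal_nonneg),
    (h _ _).trans (le_add_of_nonneg_left ENNReal.toReal_nonneg),
    (h _ _).trans (le_add_of_nonneg_left ENNReal.toReal_nonneg),
    (h _ _).trans (le_add_of_nonneg_left ENNReal.toReal_nonneg)⟩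

lemma shiftSet_bddBelow (ε : ℝ) (μ ν : Measure ℝ) :
    BddBelow {δ : ℝ | 0 ≤ δ ∧ ∀ x : ℝ,
    (μ (Set.Iic x)).toReal ≤ (ν (Set.Iic (x + ε))).toReal + δ ∧
    (μ (Set.Ici x)).toReal ≤ (ν (Set.Ici (x - ε))).toReal + δ ∧
    (ν (Set.Iic x)).toReal ≤ (μ (Set.Iic (x + ε))).toReal + δ ∧
    (ν (Set.Ici x)).toReal ≤ (μ (Set.Ici (x - ε))).toReal + δ} :=
  ⟨0, fun _ h => h.1⟩

/-- Generalized triangle inequality for the shift distance. -/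
theorem stmt_17 (μ₀ μ₁ μ₂ : Measure ℝ)
    [IsProbabilityMeasure μ₀] [IsProbabilityMeasure μ₁] [IsProbabilityMeasure μ₂]
    (ε₁ ε₂ : ℝ) (hε₁ : 0 ≤ ε₁) (hε₂ : 0 ≤ ε₂) :
    shiftDist (ε₁ + ε₂) μ₀ μ₂ ≤ shiftDist ε₁ μ₀ μ₁ + shiftDist ε₂ μ₁ μ₂ := by
  unfold shiftDist
  have hne₁ := Set.nonempty_of_mem (shiftSet_one_mem ε₁ μ₀ μ₁)
  have hne₂ := Set.nonempty_of_mem (shiftSet_one_mem ε₂ μ₁ μ₂)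
  have key : ∀ δ₁ ∈ {δ : ℝ | 0 ≤ δ ∧ ∀ x : ℝ,
      (μ₀ (Set.Iic x)).toReal ≤ (μ₁ (Set.Iic (x + ε₁))).toReal + δ ∧
      (μ₀ (Set.Ici x)).toReal ≤ (μ₁ (Set.Ici (x - ε₁))).toReal + δ ∧
      (μ₁ (Set.Iic x)).toReal ≤ (μ₀ (Set.Iic (x + ε₁))).toReal + δ ∧
      (μ₁ (Set.Ici x)).toReal ≤ (μ₀ (Set.Ici (x - ε₁))).toReal + δ},
      ∀ δ₂ ∈ {δ : ℝ | 0 ≤ δ ∧ ∀ x : ℝ,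
      (μ₁ (Set.Iic x)).toReal ≤ (μ₂ (Set.Iic (x + ε₂))).toReal + δ ∧
      (μ₁ (Set.Ici x)).toReal ≤ (μ₂ (Set.Ici (x - ε₂))).toReal + δ ∧
      (μ₂ (Set.Iic x)).toReal ≤ (μ₁ (Set.Iic (x + ε₂))).toReal + δ ∧
      (μ₂ (Set.Ici x)).toReal ≤ (μ₁ (Set.Ici (x - ε₂))).toReal + δ},
      δ₁ + δ₂ ∈ {δ : ℝ | 0 ≤ δ ∧ ∀ x : ℝ,
      (μ₀ (Set.Iic x)).toReal ≤ (μ₂ (Set.Iic (x + (ε₁ + ε₂)))).toReal + δ ∧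
      (μ₀ (Set.Ici x)).toReal ≤ (μ₂ (Set.Ici (x - (ε₁ + ε₂)))).toReal + δ ∧
      (μ₂ (Set.Iic x)).toReal ≤ (μ₀ (Set.Iic (x + (ε₁ + ε₂)))).toReal + δ ∧
      (μ₂ (Set.Ici x)).toReal ≤ (μ₀ (Set.Ici (x - (ε₁ + ε₂)))).toReal + δ} := by
    rintro δ₁ ⟨hδ₁0, h₁⟩ δ₂ ⟨hδ₂0, h₂⟩
    refine ⟨add_nonneg hδ₁0 hδ₂0, fun x => ?_⟩
    obtain ⟨a₁, a₂, a₃, a₄⟩ := h₁ x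
    obtain ⟨b₁, b₂, b₃, b₄⟩ := h₂ (x + ε₁)
    obtain ⟨c₁, c₂, c₃, c₄⟩ := h₂ x
    obtain ⟨d₁, d₂, d₃, d₄⟩ := h₂ (x - ε₁)
    obtain ⟨e₁, e₂, e₃, e₄⟩ := h₁ (x + ε₂)
    obtain ⟨f₁, f₂, f₃, f₄⟩ := h₁ (x - ε₂)
    refine ⟨?_, ?_, ?_, ?_⟩
    · calc (μ₀ (Set.Iic x)).toReal ≤ (μ₁ (Set.Iic (x + ε₁))).toReal + δ₁ := a₁
        _ ≤ ((μ₂ (Set.Iic (x + ε₁ + ε₂))).toReal + δ₂) + δ₁ := by linarith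
        _ = (μ₂ (Set.Iic (x + (ε₁ + ε₂)))).toReal + (δ₁ + δ₂) := by ring_nf
    · calc (μ₀ (Set.Ici x)).toReal ≤ (μ₁ (Set.Ici (x - ε₁))).toReal + δ₁ := a₂
        _ ≤ ((μ₂ (Set.Ici (x - ε₁ - ε₂))).toReal + δ₂) + δ₁ := by linarith
        _ = (μ₂ (Set.Ici (x - (ε₁ + ε₂)))).toReal + (δ₁ + δ₂) := by ring_nf
    · calc (μ₂ (Set.Iic x)).toReal ≤ (μ₁ (Set.Iic (x + ε₂))).toReal + δ₂ := c₃
        _ ≤ ((μ₀ (Set.Iic (x + ε₂ + ε₁))).toReal + δ₁) + δ₂ := by linarith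
        _ = (μ₀ (Set.Iic (x + (ε₁ + ε₂)))).toReal + (δ₁ + δ₂) := by ring_nf
    · calc (μ₂ (Set.Ici x)).toReal ≤ (μ₁ (Set.Ici (x - ε₂))).toReal + δ₂ := c₄
        _ ≤ ((μ₀ (Set.Ici (x - ε₂ - ε₁))).toReal + δ₁) + δ₂ := by linarith
        _ = (μ₀ (Set.Ici (x - (ε₁ + ε₂)))).toReal + (δ₁ + δ₂) := by ring_nf
  rw [← sub_le_iff_le_add']
  apply le_csInf hne₂
  intro δ₂ hδ₂
  rw [sub_le_iff_le_add, ← sub_le_iff_le_add']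
  apply le_csInf hne₁
  intro δ₁ hδ₁
  rw [sub_le_iff_le_add]
  exact csInf_le (shiftSet_bddBelow _ _ _) (key δ₁ hδ₁ δ₂ hδ₂)
end
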